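/- arXiv:2305.08319 — 3 statements merged into one kernel-verified Lean document; each statement's English description precedes it below -/
import Mathlib

section
/- Let φ be an LTLf formula over a finite set Prop, let Σ = 2^Prop, and let D be a complete DFA over Σ with m states, whose initial state is not accepting, such that L(D) = {ρ ∈ Σ^+ : ρ ⊨ ¬φ}. Let B be the deterministic Büchi automaton obtained from D by first turning every accepting state into an accepting sink and then swapping accepting and non-accepting states. Then B has m states and L(B) = pref(φ). In particular, pref(φ) is ω-regular (recognized by a Büchi automaton). -/
/-- Syntax of LTLf (and LTL) formulas over atomic propositions `P`. -/
inductive LTLf (P : Type) : Type where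
  | tt : LTLf P
  | ff : LTLf P
  | atom : P → LTLf P
  | not : LTLf P → LTLf P
  | and : LTLf P → LTLf P → LTLf P
  | next : LTLf P → LTLf P
  | untl : LTLf P → LTLf P → LTLf P

/-- LTLf satisfaction at position `i` of a finite trace `ρ` over `2^P`. -/
def LTLf.SatAt {P : Type} : LTLf P → List (Set P) → ℕ → Prop
  | .tt, _, _ => True
  | .ff, _, _ => False
  | .atom a, ρ, i => a ∈ ρ.getD i ∅
  | .not φ, ρ, i => ¬ LTLf.SatAt φ ρ i
  | .and φ ψ, ρ, i => LTLf.SatAt φ ρ i ∧ LTLf.SatAt ψ ρ i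
  | .next φ, ρ, i => i + 1 < ρ.length ∧ LTLf.SatAt φ ρ (i + 1)
  | .untl φ ψ, ρ, i => ∃ j, i ≤ j ∧ j < ρ.length ∧ LTLf.SatAt ψ ρ j ∧
      ∀ k, i ≤ k → k < j → LTLf.SatAt φ ρ k

/-- `ρ ⊨ φ` means `ρ, 0 ⊨ φ` (intended for nonempty finite traces). -/
def LTLf.Sat {P : Type} (φ : LTLf P) (ρ : List (Set P)) : Prop :=
  LTLf.SatAt φ ρ 0

/-- The length-`n` prefix `w_0 ⋯ w_{n-1}` of an infinite word `w`. -/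
def prefixWord {α : Type} (w : ℕ → α) (n : ℕ) : List α :=
  (List.range n).map w

/-- The prefix language of an LTLf formula: all infinite words every nonempty
finite prefix of which satisfies `φ`. -/
def pref {P : Type} (φ : LTLf P) : Set (ℕ → Set P) :=
  { w | ∀ n : ℕ, 0 < n → LTLf.Sat φ (prefixWord w n) }

/-- A nondeterministic Büchi automaton over alphabet `A` with state type `S`. -/
structure NBA (A : Type) (S : Type) where
  init : S
  trans : S → A → S → Prop
  acc : Set S

/-- `r` is a run of `M` on the infinite word `w`. -/
def NBA.IsRun {A S : Type} (M : NBA A S) (w : ℕ → A) (r : ℕ → S) : Prop :=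
  r 0 = M.init ∧ ∀ i, M.trans (r i) (w i) (r (i + 1))

/-- The ω-language of a nondeterministic Büchi automaton: words admitting a run
that visits the accepting set infinitely often. -/
def NBA.Lang {A S : Type} (M : NBA A S) : Set (ℕ → A) :=
  { w | ∃ r : ℕ → S, M.IsRun w r ∧ ∀ m : ℕ, ∃ n, m ≤ n ∧ r n ∈ M.acc }

/-- The state reached by a deterministic automaton after reading finite word `u`. -/
def dfaRun {A Q : Type} (step : Q → A → Q) (init : Q) (u : List A) : Q :=
  u.foldl step init


lemma prefixWord_succ {α : Type} (w : ℕ → α) (n : ℕ) :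
    prefixWord w (n + 1) = prefixWord w n ++ [w n] := by
  simp [prefixWord, List.range_succ]

lemma dfaRun_snoc {A Q : Type} (step : Q → A → Q) (init : Q) (u : List A) (a : A) :
    dfaRun step init (u ++ [a]) = step (dfaRun step init u) a := by
  simp [dfaRun]

/-- Let φ be an LTLf formula, D a complete DFA with m states whose
initial state is not accepting and with L(D) = {ρ ∈ Σ⁺ : ρ ⊨ ¬φ}, and let B be
the DBA obtained from D by turning every accepting state into an accepting sink
(`step'`) and then swapping accepting and non-accepting states (acceptance set
`accᶜ`).  Then B has m states, L(B) = pref(φ), and in particular pref(φ) is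
ω-regular (recognized by a Büchi automaton). -/
theorem pref_recognized_by_sink_swap_dba {P : Type} [Fintype P] (φ : LTLf P)
    {Q : Type} [Fintype Q] (m : ℕ) (hcard : Fintype.card Q = m)
    (step : Q → Set P → Q) (init : Q) (acc : Set Q)
    (hinit : init ∉ acc)
    (hD : ∀ u : List (Set P),
        dfaRun step init u ∈ acc ↔ (u ≠ [] ∧ LTLf.Sat (LTLf.not φ) u))
    (step' : Q → Set P → Q)
    (hsink : ∀ f ∈ acc, ∀ a, step' f a = f)
    (hcopy : ∀ s, s ∉ acc → ∀ a, step' s a = step s a) :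
    Fintype.card Q = m ∧
    { w : ℕ → Set P | ∀ k : ℕ, ∃ n, k ≤ n ∧ dfaRun step' init (prefixWord w n) ∈ accᶜ }
      = pref φ ∧
    ∃ M : NBA (Set P) Q, M.Lang = pref φ := by
  -- abbreviations
  set R : (ℕ → Set P) → ℕ → Q := fun w n => dfaRun step init (prefixWord w n) with hR
  set R' : (ℕ → Set P) → ℕ → Q := fun w n => dfaRun step' init (prefixWord w n) with hR'
  have hzero : ∀ w, R w 0 = init ∧ R' w 0 = init := by
    intro w; constructor <;> simp [hR, hR', prefixWord, dfaRun]
  have hstep : ∀ w n, R w (n+1) = step (R w n) (w n) := by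
    intro w n; simp [hR, prefixWord_succ, dfaRun_snoc]
  have hstep' : ∀ w n, R' w (n+1) = step' (R' w n) (w n) := by
    intro w n; simp [hR', prefixWord_succ, dfaRun_snoc]
  -- L2 : if the D-run avoids acc strictly before n, the two runs agree at n
  have L2 : ∀ w n, (∀ m < n, R w m ∉ acc) → R' w n = R w n := by
    intro w n
    induction n with
    | zero => intro _; rw [(hzero w).1, (hzero w).2]
    | succ n ih =>
      intro h
      have hn : R' w n = R w n := ih fun m hm => h m (Nat.lt_succ_of_lt hm)
      rw [hstep' w n, hn, hcopy _ (h n (Nat.lt_succ_self n)) (w n), hstep w n]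
  -- sink absorption
  have Lsink : ∀ w n, R' w n ∈ acc → ∀ N, n ≤ N → R' w N ∈ acc := by
    intro w n hn N hN
    induction N with
    | zero => exact Nat.le_zero.mp hN ▸ hn
    | succ N ih =>
      rcases Nat.lt_or_ge n (N+1) with h | h
      · have hN' : R' w N ∈ acc := ih (Nat.lt_succ_iff.mp h)
        rw [hstep' w N, hsink _ hN' (w N)]; exact hN'
      · exact (Nat.le_antisymm hN h) ▸ hn
  -- acceptance condition ↔ run' never in acc ↔ D-run never in acc
  have key : ∀ w : ℕ → Set P,
      (∀ k : ℕ, ∃ n, k ≤ n ∧ R' w n ∈ accᶜ) ↔ (∀ n, R w n ∉ acc) := by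
    intro w
    constructor
    · intro h n hn
      -- find a minimal n with R w n ∈ acc; then run' agrees up to there
      have hex : ∃ n, R w n ∈ acc := ⟨n, hn⟩
      classical
      set n0 := Nat.find hex with hn0
      have hmem : R w n0 ∈ acc := Nat.find_spec hex
      have hlt : ∀ m < n0, R w m ∉ acc := fun m hm => Nat.find_min hex hm
      have heq : R' w n0 = R w n0 := L2 w n0 hlt
      obtain ⟨n1, hn1, hn1c⟩ := h n0
      exact hn1c (Lsink w n0 (heq ▸ hmem) n1 hn1)
    · intro h k
      exact ⟨k, le_rfl, fun hc => h k ((L2 w k (fun m _ => h m)) ▸ hc)⟩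
      
  -- D-run never in acc ↔ w ∈ pref φ
  have key2 : ∀ w : ℕ → Set P, (∀ n, R w n ∉ acc) ↔ w ∈ pref φ := by
    intro w
    constructor
    · intro h n hn
      have := h n
      rw [hD (prefixWord w n)] at this
      have hne : prefixWord w n ≠ [] := by
        simp [prefixWord]; omega
      by_contra hc
      exact this ⟨hne, hc⟩
    · intro h n
      rw [hR]; rw [hD (prefixWord w n)]
      rintro ⟨hne, hns⟩
      have hn : 0 < n := by
        by_contra hc
        exact hne (by simp [prefixWord, Nat.le_zero.mp (Nat.not_lt.mp hc)])
      exact hns (h n hn)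
  have hset : { w : ℕ → Set P | ∀ k : ℕ, ∃ n, k ≤ n ∧ dfaRun step' init (prefixWord w n) ∈ accᶜ }
      = pref φ := by
    ext w
    simp only [Set.mem_setOf_eq]
    rw [show (∀ k : ℕ, ∃ n, k ≤ n ∧ dfaRun step' init (prefixWord w n) ∈ accᶜ)
        = (∀ k : ℕ, ∃ n, k ≤ n ∧ R' w n ∈ accᶜ) from rfl, key w, key2 w]
  refine ⟨hcard, hset, ⟨⟨init, fun s a s' => s' = step' s a, accᶜ⟩, ?_⟩⟩
  ext w
  rw [← hset]
  simp only [NBA.Lang, NBA.IsRun, Set.mem_setOf_eq]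
  constructor
  · rintro ⟨r, ⟨hr0, hrs⟩, hacc⟩
    have hreq : ∀ n, r n = R' w n := by
      intro n
      induction n with
      | zero => rw [hr0, (hzero w).2]
      | succ n ih => rw [hrs n, ih, hstep' w n]
    intro k
    obtain ⟨n, hkn, hn⟩ := hacc k
    have hn' := hn
    rw [hreq n] at hn'
    exact ⟨n, hkn, hn'⟩
  · intro h
    exact ⟨R' w, ⟨(hzero w).2, fun i => hstep' w i⟩, h⟩
end

section
/- Fix d ≥ 1 and let D = {0, 1, …, d−1}. Let K_d be the ω-language over the alphabet D ∪ {&} consisting of all words x·&·y with x ∈ D^*, y ∈ D^ω such that every digit occurring in y also occurs in x. Then every nondeterministic Büchi automaton recognizing K_d has at least 2^d − 1 states. -/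
/-- Concatenation of a finite word `u` with an infinite word `v`. -/
def wcat {α : Type} (u : List α) (v : ℕ → α) : ℕ → α :=
  fun i => if h : i < u.length then u.get ⟨i, h⟩ else v (i - u.length)

/-- The ω-language `K_d` over the alphabet `D ∪ {&}` (with `Option.none` playing
the role of `&` and `some c` the role of a digit `c ∈ D = {0,…,d-1}`): words
`x · & · y` with `x ∈ D^*`, `y ∈ D^ω` such that every digit occurring in `y`
also occurs in `x`. -/
def Kd (d : ℕ) : Set (ℕ → Option (Fin d)) :=
  { z | ∃ (x : List (Fin d)) (y : ℕ → Fin d),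
      z = wcat (x.map Option.some ++ [Option.none]) (fun i => Option.some (y i)) ∧
      ∀ c : Fin d, (∃ i, y i = c) → c ∈ x }

lemma wcat_spec {α : Type} (u : List α) (g : ℕ → α) (i : ℕ) :
    wcat (u.map Option.some ++ [Option.none]) (fun i => Option.some (g i)) i =
      if h : i < u.length then Option.some (u.get ⟨i, h⟩)
      else if i = u.length then Option.none
      else Option.some (g (i - (u.length + 1))) := by
  have hlen : (u.map Option.some ++ [Option.none]).length = u.length + 1 := by simp
  by_cases h1 : i < u.length
  · have h1' : i < (u.map Option.some ++ [Option.none]).length := by omega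
    rw [wcat, dif_pos h1', dif_pos h1]
    rw [List.get_eq_getElem, List.getElem_append_left (by simpa using h1)]
    simp
  · rw [dif_neg h1]
    by_cases h2 : i = u.length
    · subst h2
      have h1' : u.length < (u.map Option.some ++ [Option.none]).length := by omega
      rw [wcat, dif_pos h1', if_pos rfl]
      rw [List.get_eq_getElem, List.getElem_append_right (by simp)]
      · simp
    · have h1' : ¬ i < (u.map Option.some ++ [Option.none]).length := by omega
      rw [wcat, dif_neg h1', if_neg h2]
      simp [hlen]

lemma mod_succ_lt' {n e : ℕ} (h : n % e + 1 < e) : (n+1) % e = n % e + 1 := by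
  conv_lhs => rw [← Nat.div_add_mod n e]
  rw [Nat.add_assoc, Nat.mul_add_mod]
  exact Nat.mod_eq_of_lt h

lemma mod_succ_eq' {n e : ℕ} (h : n % e + 1 = e) : (n+1) % e = 0 := by
  conv_lhs => rw [← Nat.div_add_mod n e]
  rw [Nat.add_assoc, Nat.mul_add_mod, h, Nat.mod_self]

lemma splice {d : ℕ} {S : Type} (M : NBA (Option (Fin d)) S) (hL : M.Lang = Kd d)
    (xP : List (Fin d)) (yP : ℕ → Fin d) (rP : ℕ → S)
    (hrP : M.IsRun (wcat (xP.map Option.some ++ [Option.none]) (fun i => Option.some (yP i))) rP)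
    (xQ : List (Fin d)) (yQ : ℕ → Fin d) (rQ : ℕ → S)
    (hrQ : M.IsRun (wcat (xQ.map Option.some ++ [Option.none]) (fun i => Option.some (yQ i))) rQ)
    (s : S) (hs : s ∈ M.acc)
    (a : ℕ) (ha : xP.length + 1 ≤ a) (hra : rP a = s)
    (b c : ℕ) (hb : xQ.length + 1 ≤ b) (hbc : b < c) (hrb : rQ b = s) (hrc : rQ c = s)
    (c0 : Fin d) (hc0 : ∃ j, j < c - b ∧ yQ (b + j - (xQ.length + 1)) = c0) :
    c0 ∈ xP := by
  classical
  set wP : ℕ → Option (Fin d) :=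
    wcat (xP.map Option.some ++ [Option.none]) (fun i => Option.some (yP i)) with hwP
  set wQ : ℕ → Option (Fin d) :=
    wcat (xQ.map Option.some ++ [Option.none]) (fun i => Option.some (yQ i)) with hwQ
  set e := c - b with hedef
  have hepos : 0 < e := by omega
  set z : ℕ → Option (Fin d) := fun i => if i < a then wP i else wQ (b + (i - a) % e) with hz
  set ρ : ℕ → S := fun i => if i < a then rP i else rQ (b + (i - a) % e) with hρ
  have hρrun : M.IsRun z ρ := by
    constructor
    · simp only [hρ, if_pos (show 0 < a by omega)]
      exact hrP.1
    · intro i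
      by_cases h1 : i + 1 < a
      · simp only [hz, hρ, if_pos h1, if_pos (show i < a by omega)]
        exact hrP.2 i
      · by_cases h2 : i + 1 = a
        · have h0 : (i + 1 - a) % e = 0 := by
            have h4 : i + 1 - a = 0 := by omega
            simp [h4]
          simp only [hz, hρ, if_neg h1, if_pos (show i < a by omega), h0]
          have h5 : rQ (b + 0) = rP (i + 1) := by rw [h2, hra]; simpa using hrb
          rw [h5]
          exact hrP.2 i
        · have hai : a ≤ i := by omega
          have hje : (i - a) % e < e := Nat.mod_lt _ hepos
          have hia : i + 1 - a = (i - a) + 1 := by omega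
          simp only [hz, hρ, if_neg (show ¬ i < a by omega), if_neg h1]
          by_cases h3 : (i - a) % e + 1 < e
          · rw [hia, mod_succ_lt' h3, ← Nat.add_assoc]
            exact hrQ.2 (b + (i - a) % e)
          · have h3' : (i - a) % e + 1 = e := by omega
            rw [hia, mod_succ_eq' h3']
            have h6 : rQ (b + 0) = rQ (b + (i - a) % e + 1) := by
              have h7 : b + (i - a) % e + 1 = c := by omega
              rw [h7, hrc]
              simpa using hrb
            rw [h6]
            exact hrQ.2 (b + (i - a) % e)
  have hzL : z ∈ M.Lang := by
    refine ⟨ρ, hρrun, fun m => ⟨a + e * m, ?_, ?_⟩⟩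
    · have : m ≤ e * m := Nat.le_mul_of_pos_left m hepos
      omega
    · have h0 : (a + e * m - a) % e = 0 := by
        simp [Nat.mul_mod_right]
      simp only [hρ, if_neg (show ¬ a + e * m < a by omega), h0]
      simpa [hrb] using hs
  rw [hL] at hzL
  obtain ⟨x, y, hzeq, hy⟩ := hzL
  -- z i = none iff i = xP.length
  have hznone : ∀ i, z i = Option.none ↔ i = xP.length := by
    intro i
    constructor
    · intro h
      by_contra hne
      by_cases h1 : i < a
      · simp only [hz, if_pos h1, hwP, wcat_spec] at h
        by_cases h2 : i < xP.length
        · rw [dif_pos h2] at h; simp at h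
        · rw [dif_neg h2, if_neg hne] at h; simp at h
      · simp only [hz, if_neg h1, hwQ, wcat_spec] at h
        have h2 : ¬ b + (i - a) % e < xQ.length := by omega
        have h3 : ¬ b + (i - a) % e = xQ.length := by omega
        rw [dif_neg h2, if_neg h3] at h
        simp at h
    · rintro rfl
      simp only [hz, if_pos (show xP.length < a by omega), hwP, wcat_spec]
      simp
  have hxlen : x.length = xP.length := by
    rw [← hznone]
    rw [hzeq, wcat_spec]
    rw [dif_neg (lt_irrefl _), if_pos rfl]
  have hxeq : x = xP := by
    apply List.ext_get hxlen
    intro n h1 h2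
    have e1 : z n = Option.some (x.get ⟨n, h1⟩) := by
      rw [hzeq, wcat_spec, dif_pos h1]
    have e2 : z n = Option.some (xP.get ⟨n, h2⟩) := by
      simp only [hz, if_pos (show n < a by omega), hwP, wcat_spec]
      rw [dif_pos h2]
    rw [e1] at e2
    exact Option.some.inj e2
  obtain ⟨j, hj, hyj⟩ := hc0
  have h1 : z (a + j) = Option.some c0 := by
    have hmod : (a + j - a) % e = j := by
      have : a + j - a = j := by omega
      rw [this, Nat.mod_eq_of_lt hj]
    simp only [hz, if_neg (show ¬ a + j < a by omega), hmod, hwQ, wcat_spec]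
    rw [dif_neg (show ¬ b + j < xQ.length by omega), if_neg (show ¬ b + j = xQ.length by omega)]
    rw [hyj]
  have h2 : z (a + j) = Option.some (y (a + j - (x.length + 1))) := by
    rw [hzeq, wcat_spec]
    rw [dif_neg (show ¬ a + j < x.length by omega), if_neg (show ¬ a + j = x.length by omega)]
  rw [h1] at h2
  have : c0 ∈ x := hy c0 ⟨a + j - (x.length + 1), (Option.some.inj h2).symm⟩
  rwa [hxeq] at this


lemma exists_mod_window (len k n : ℕ) (hlen : 0 < len) (hk : k < len) :
    ∃ i, n ≤ i ∧ i < n + len ∧ i % len = k := by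
  obtain ⟨q, m, hm, hn⟩ : ∃ q m, m < len ∧ n = len * q + m :=
    ⟨n / len, n % len, Nat.mod_lt _ hlen, (Nat.div_add_mod n len).symm⟩
  rcases le_or_gt m k with h | h
  · refine ⟨len * q + k, by omega, by omega, ?_⟩
    rw [Nat.mul_add_mod]; exact Nat.mod_eq_of_lt hk
  · refine ⟨len * (q + 1) + k, ?_, ?_, ?_⟩
    · have : len * (q + 1) = len * q + len := by ring
      omega
    · have : len * (q + 1) = len * q + len := by ring
      omega
    · rw [Nat.mul_add_mod]; exact Nat.mod_eq_of_lt hk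

lemma exists_data {d : ℕ} {S : Type} [Fintype S] (M : NBA (Option (Fin d)) S)
    (hL : M.Lang = Kd d) (P : Finset (Fin d)) (hP : P.Nonempty) :
    ∃ (x : List (Fin d)) (y : ℕ → Fin d) (r : ℕ → S) (s : S) (a b c : ℕ),
      M.IsRun (wcat (x.map Option.some ++ [Option.none]) (fun i => Option.some (y i))) r ∧
      s ∈ M.acc ∧
      x.length + 1 ≤ a ∧ r a = s ∧
      x.length + 1 ≤ b ∧ b < c ∧ r b = s ∧ r c = s ∧
      (∀ c0 : Fin d, c0 ∈ x ↔ c0 ∈ P) ∧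
      (∀ c0 ∈ P, ∃ j, j < c - b ∧ y (b + j - (x.length + 1)) = c0) := by
  classical
  set x : List (Fin d) := P.sort (· ≤ ·) with hx
  have hxmem : ∀ c0 : Fin d, c0 ∈ x ↔ c0 ∈ P := fun c0 => Finset.mem_sort _
  have hlen : 0 < x.length := by
    rw [Finset.length_sort]
    exact Finset.card_pos.mpr hP
  set y : ℕ → Fin d := fun i => x.get ⟨i % x.length, Nat.mod_lt _ hlen⟩ with hy
  have hwKd : wcat (x.map Option.some ++ [Option.none]) (fun i => Option.some (y i)) ∈ Kd d := by
    refine ⟨x, y, rfl, ?_⟩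
    rintro c ⟨i, rfl⟩
    exact List.get_mem _ _
  rw [← hL] at hwKd
  obtain ⟨r, hrun, hacc⟩ := hwKd
  -- pigeonhole
  have hinf : {n : ℕ | r n ∈ M.acc}.Infinite := by
    apply Set.infinite_of_not_bddAbove
    rintro ⟨m, hm⟩
    obtain ⟨n, hn1, hn2⟩ := hacc (m + 1)
    have := hm hn2
    omega
  haveI := hinf.to_subtype
  obtain ⟨s, hs⟩ := Finite.exists_infinite_fiber (fun n : {n : ℕ | r n ∈ M.acc} => r n)
  have hfib : ((fun n : {n : ℕ | r n ∈ M.acc} => r n) ⁻¹' {s}).Infinite :=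
    Set.infinite_coe_iff.mp hs
  have hsacc : s ∈ M.acc := by
    obtain ⟨⟨n, hn⟩, hfn⟩ := hfib.nonempty
    simp only [Set.mem_preimage, Set.mem_singleton_iff] at hfn
    rw [← hfn]
    exact hn
  have hV : {n : ℕ | r n = s}.Infinite := by
    apply Set.Infinite.mono (s := Subtype.val '' ((fun n : {n : ℕ | r n ∈ M.acc} => r n) ⁻¹' {s}))
    · rintro _ ⟨⟨n, hn⟩, hfn, rfl⟩
      simpa using hfn
    · exact hfib.image Subtype.val_injective.injOn
  obtain ⟨a, haV, ha⟩ := hV.exists_gt x.length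
  obtain ⟨c, hcV, hc⟩ := hV.exists_gt (a + x.length)
  refine ⟨x, y, r, s, a, a, c, hrun, hsacc, by omega, haV, by omega, by omega, haV, hcV, hxmem, ?_⟩
  intro c0 hc0
  obtain ⟨⟨k, hk⟩, hget⟩ := List.mem_iff_get.mp ((hxmem c0).mpr hc0)
  obtain ⟨i, hi1, hi2, hi3⟩ := exists_mod_window x.length k (a - (x.length + 1)) hlen hk
  refine ⟨i - (a - (x.length + 1)), by omega, ?_⟩
  have : a + (i - (a - (x.length + 1))) - (x.length + 1) = i := by omega
  rw [this]
  simp only [hy]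
  rw [← hget]
  congr 1
  exact Fin.ext hi3

/-- For d ≥ 1, every nondeterministic Büchi automaton recognizing
`K_d` has at least `2^d − 1` states. -/
theorem Kd_nba_lower_bound (d : ℕ) (hd : 1 ≤ d)
    (S : Type) (inst : Fintype S) (M : NBA (Option (Fin d)) S)
    (hL : M.Lang = Kd d) :
    2 ^ d - 1 ≤ @Fintype.card S inst := by
  classical
  have hdata := fun (P : {P : Finset (Fin d) // P.Nonempty}) => exists_data M hL P.1 P.2
  choose x y r st a b c h1 h2 h3 h4 h5 h6 h7 h8 h9 h10 using hdata
  have hinj : Function.Injective st := by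
    intro P Q h
    have hQP : Q.1 ⊆ P.1 := by
      intro c0 hc0
      have hm := splice M hL (x P) (y P) (r P) (h1 P) (x Q) (y Q) (r Q) (h1 Q) (st P) (h2 P)
        (a P) (h3 P) (h4 P) (b Q) (c Q) (h5 Q) (h6 Q) (by rw [h]; exact h7 Q)
        (by rw [h]; exact h8 Q) c0 (h10 Q c0 hc0)
      exact (h9 P c0).mp hm
    have hPQ : P.1 ⊆ Q.1 := by
      intro c0 hc0
      have hm := splice M hL (x Q) (y Q) (r Q) (h1 Q) (x P) (y P) (r P) (h1 P) (st Q) (h2 Q)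
        (a Q) (h3 Q) (h4 Q) (b P) (c P) (h5 P) (h6 P) (by rw [← h]; exact h7 P)
        (by rw [← h]; exact h8 P) c0 (h10 P c0 hc0)
      exact (h9 Q c0).mp hm
    exact Subtype.ext (Finset.Subset.antisymm hPQ hQP)
  have hcard : Fintype.card {P : Finset (Fin d) // P.Nonempty} ≤ Fintype.card S :=
    Fintype.card_le_of_injective st hinj
  have hcount : Fintype.card {P : Finset (Fin d) // P.Nonempty} = 2 ^ d - 1 := by
    rw [Fintype.card_congr (Equiv.subtypeEquivRight
      (fun P : Finset (Fin d) => Finset.nonempty_iff_ne_empty))]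
    rw [Fintype.card_subtype_compl, Fintype.card_subtype_eq, Fintype.card_finset, Fintype.card_fin]
  omega
end

section
/- Let C be a nondeterministic Büchi automaton over alphabet Σ with m states such that L(C) is a safety language. Then there exists a nondeterministic Büchi automaton A over Σ with at most m states, all of whose states are accepting, such that L(A) = L(C). -/
/-- A safety ω-language: every word outside it has a finite prefix none of
whose infinite extensions is in the language. -/
def SafetyLang {A : Type} (L : Set (ℕ → A)) : Prop :=
  ∀ w ∉ L, ∃ n : ℕ, ∀ y : ℕ → A, wcat (prefixWord w n) y ∉ L

/-- A state is live if some accepting run of `C` starts at it. -/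
def Live {A S : Type} (C : NBA A S) (s : S) : Prop :=
  ∃ (v : ℕ → A) (rr : ℕ → S), rr 0 = s ∧ (∀ i, C.trans (rr i) (v i) (rr (i+1))) ∧
    ∀ m : ℕ, ∃ n, m ≤ n ∧ rr n ∈ C.acc

lemma live_back {A S : Type} (C : NBA A S) {s t : S} {a : A}
    (h : C.trans s a t) (hl : Live C t) : Live C s := by
  obtain ⟨v, rr, h0, htr, hacc⟩ := hl
  refine ⟨fun j => if j = 0 then a else v (j-1),
          fun j => if j = 0 then s else rr (j-1), rfl, ?_, ?_⟩
  · intro i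
    cases i with
    | zero => simpa [h0] using h
    | succ k => simpa using htr k
  · intro m
    obtain ⟨n, hn, ha⟩ := hacc m
    exact ⟨n+1, by omega, by simpa using ha⟩

/-- If C is a nondeterministic Büchi automaton with m states
whose language is a safety language, then there is a nondeterministic Büchi
automaton A with at most m states, all of whose states are accepting, with
L(A) = L(C). -/
theorem safety_nba_trim_all_accepting {A S : Type} [Fintype S]
    (C : NBA A S) (hsafe : SafetyLang C.Lang) :
    ∃ (S' : Type) (inst : Fintype S') (M : NBA A S'),
      @Fintype.card S' inst ≤ Fintype.card S ∧
      M.acc = Set.univ ∧ M.Lang = C.Lang := by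
  classical
  refine ⟨S, inferInstance, ⟨C.init, fun s a t => C.trans s a t ∧ Live C t, Set.univ⟩,
    le_rfl, rfl, ?_⟩
  set M : NBA A S := ⟨C.init, fun s a t => C.trans s a t ∧ Live C t, Set.univ⟩ with hM
  ext w
  constructor
  · -- M.Lang ⊆ C.Lang
    rintro ⟨r, ⟨hr0, hrt⟩, -⟩
    by_contra hw
    obtain ⟨n, hn⟩ := hsafe w hw
    have hlive : Live C (r n) := by
      cases n with
      | zero =>
        have := (hrt 0)
        exact live_back C this.1 this.2
      | succ k => exact (hrt k).2
    obtain ⟨v, rr, h0, htr, hacc⟩ := hlive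
    apply hn v
    refine ⟨fun i => if i < n then r i else rr (i - n), ⟨?_, ?_⟩, ?_⟩
    · by_cases h : 0 < n
      · simpa [h] using hr0
      · have hn0 : n = 0 := by omega
        simp [hn0, h0, hr0, hM]
    · intro i
      have hw' : wcat (prefixWord w n) v i =
          if i < n then w i else v (i - n) := by
        simp only [wcat, prefixWord, List.length_map, List.length_range]
        split
        · next h => simp [List.getElem_map, h]
        · rfl
      rcases lt_trichotomy (i+1) n with h | h | h
      · have hi : i < n := by omega
        simpa [hi, h, hw'] using (hrt i).1
      · have hi : i < n := by omega
        have : rr (i + 1 - n) = r n := by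
          have : i + 1 - n = 0 := by omega
          rw [this, h0]
        simp only [hw', hi, if_pos, this]
        rw [if_neg (by omega)]
        simpa [← h] using (hrt i).1
      · have hi : ¬ i < n := by omega
        have h1 : ¬ i + 1 < n := by omega
        have : i + 1 - n = (i - n) + 1 := by omega
        simp only [hw', hi, h1, if_neg, not_false_iff, this]
        exact htr (i - n)
    · intro m
      obtain ⟨k, hk, ha⟩ := hacc m
      refine ⟨k + n, by omega, ?_⟩
      have : ¬ k + n < n := by omega
      simpa [this] using ha
  · -- C.Lang ⊆ M.Lang
    rintro ⟨r, ⟨hr0, hrt⟩, hacc⟩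
    refine ⟨r, ⟨hr0, ?_⟩, fun m => ⟨m, le_rfl, trivial⟩⟩
    intro i
    refine ⟨hrt i, ?_⟩
    · exact ⟨fun j => w (i + 1 + j), fun j => r (i + 1 + j), rfl,
        fun j => by simpa [Nat.add_assoc] using hrt (i + 1 + j),
        fun m => by
          obtain ⟨n, hn, ha⟩ := hacc (m + i + 1)
          exact ⟨n - (i + 1), by omega, by
            have : i + 1 + (n - (i+1)) = n := by omega
            simpa [this] using ha⟩⟩
end
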